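/- arXiv:1512.03780 — 2 statements merged into one kernel-verified Lean document; each statement's English description precedes it below -/
import Mathlib

section
/- Let f ∈ k_∞ − k and let a ∈ A be nonzero. Then lim_{d→∞} q^{−(d+1)} · Σ_{b ∈ A, deg b ≤ d} χ(c_{−1}(a·b·f)) = 0 in ℂ. (This is the Weyl criterion computation showing that the A-sequence (b·f mod A) is uniformly distributed in k_∞/A.) -/
open scoped Classical
open Filter Topology

noncomputable section

namespace QuantumJ

variable (Fq : Type) [Field Fq] [Fintype Fq]

/-- `k_∞ = 𝔽_q((1/T))`, modeled as the field of Laurent series in `X = 1/T`. -/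
abbrev Kinf := LaurentSeries Fq

/-- The element `T = X⁻¹` of `k_∞`. -/
def Tinf : Kinf Fq := HahnSeries.single (-1 : ℤ) (1 : Fq)

/-- The absolute value `|f| = q^{deg_T f} = q^{-ord_X f}`. -/
def av (x : Kinf Fq) : ℝ :=
  if x = 0 then 0 else (Fintype.card Fq : ℝ) ^ (-(HahnSeries.order x))

/-- The inclusion of `A = 𝔽_q[T]` into `k_∞`. -/
def toK (a : Polynomial Fq) : Kinf Fq := Polynomial.aeval (Tinf Fq) a

/-- Membership in `k = 𝔽_q(T) ⊂ k_∞`. -/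
def IsRational (x : Kinf Fq) : Prop :=
  ∃ a b : Polynomial Fq, b ≠ 0 ∧ toK Fq b * x = toK Fq a

/-- `‖x‖ = min_{a ∈ A} |x - a|`, the distance from `x` to the nearest polynomial in `T`. -/
def dA (x : Kinf Fq) : ℝ :=
  sInf {r : ℝ | ∃ a : Polynomial Fq, r = av Fq (x - toK Fq a)}

/-- `Λ_ε(f) = {λ ∈ A : ‖λ f‖ < ε}`, viewed inside `A = 𝔽_q[T]`. -/
def Lam (f : Kinf Fq) (ε : ℝ) : Set (Polynomial Fq) :=
  {l | dA Fq (toK Fq l * f) < ε}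

/-- The `ε`-zeta function `ζ_{f,ε}(n) = Σ_{0 ≠ λ ∈ Λ_ε(f) monic} λ^{-n}`. -/
def zetaE (f : Kinf Fq) (ε : ℝ) (n : ℕ) : Kinf Fq :=
  ∑' l : {l : Polynomial Fq // l ∈ Lam Fq f ε ∧ l.Monic}, ((toK Fq l.1)⁻¹) ^ n

/-- The zeta function of `A`: `ζ_A(n) = Σ_{a monic} a^{-n}`. -/
def zetaA (n : ℕ) : Kinf Fq :=
  ∑' a : {a : Polynomial Fq // a.Monic}, ((toK Fq a.1)⁻¹) ^ n

/-- `Δ_ε(f) = -(T^{q²} - T) ζ_{f,ε}(q²-1) + (T^q - T)^q ζ_{f,ε}(q-1)^{q+1}`. -/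
def DeltaE (f : Kinf Fq) (ε : ℝ) : Kinf Fq :=
  -((Tinf Fq) ^ ((Fintype.card Fq) ^ 2) - Tinf Fq) * zetaE Fq f ε ((Fintype.card Fq) ^ 2 - 1)
    + ((Tinf Fq) ^ (Fintype.card Fq) - Tinf Fq) ^ (Fintype.card Fq)
        * (zetaE Fq f ε (Fintype.card Fq - 1)) ^ (Fintype.card Fq + 1)

/-- `g_ε(f) = -(T^q - T) ζ_{f,ε}(q-1)`. -/
def gE (f : Kinf Fq) (ε : ℝ) : Kinf Fq :=
  -((Tinf Fq) ^ (Fintype.card Fq) - Tinf Fq) * zetaE Fq f ε (Fintype.card Fq - 1)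

/-- The `ε`-modular invariant `j_ε(f) = g_ε(f)^{q+1}/Δ_ε(f) ∈ k_∞ ∪ {∞}`,
with `j_ε(f) = ∞` when `Δ_ε(f) = 0`. -/
def jE (f : Kinf Fq) (ε : ℝ) : OnePoint (Kinf Fq) :=
  if DeltaE Fq f ε = 0 then OnePoint.infty
  else ((gE Fq f ε ^ (Fintype.card Fq + 1) / DeltaE Fq f ε : Kinf Fq) : OnePoint (Kinf Fq))

/-- The quantum modular invariant `j^qt(f)`: the set of limit points in `k_∞ ∪ {∞}`
of `j_{ε_i}(f)` along sequences `ε_i → 0`, `ε_i > 0`. -/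
def jqt (f : Kinf Fq) : Set (OnePoint (Kinf Fq)) :=
  {ξ | ∃ e : ℕ → ℝ, (∀ i, 0 < e i) ∧ Tendsto e atTop (𝓝 0) ∧
    Tendsto (fun i => jE Fq f (e i)) atTop (𝓝 ξ)}

lemma Tinf_pow (i : ℕ) : Tinf Fq ^ i = HahnSeries.single (-(i:ℤ)) (1 : Fq) := by
  rw [Tinf, HahnSeries.single_pow, one_pow]
  congr 1
  simp

lemma toK_C_mul_X_pow (x : Fq) (j : ℕ) :
    toK Fq (Polynomial.C x * Polynomial.X ^ j) = HahnSeries.single (-(j:ℤ)) x := by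
  have halg : (algebraMap Fq (Kinf Fq)) x = HahnSeries.single (0:ℤ) x := by
    have h2 : (algebraMap Fq (PowerSeries Fq)) x = PowerSeries.C x := rfl
    simp [HahnSeries.algebraMap_apply', h2, HahnSeries.ofPowerSeries_C, HahnSeries.C_apply]
  rw [toK, map_mul, map_pow, Polynomial.aeval_C, Polynomial.aeval_X, Tinf_pow, halg,
    HahnSeries.single_mul_single, zero_add, mul_one]

lemma coeff_single_shift (g : Kinf Fq) (i : ℕ) (x : Fq) :
    (HahnSeries.single (-(i:ℤ)) x * g).coeff 1 = x * g.coeff (1 + (i:ℤ)) := by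
  have h5 := HahnSeries.coeff_single_mul_add (r := x) (x := g) (a := 1 + (i:ℤ)) (b := -(i:ℤ))
  rw [show (1 + (i:ℤ)) + (-(i:ℤ)) = 1 by ring] at h5
  exact h5

lemma rational_of_coeff (g : Kinf Fq) (h : ∀ n : ℤ, 0 < n → g.coeff n = 0) :
    ∃ p : Polynomial Fq, toK Fq p = g := by
  by_cases hg : g = 0
  · exact ⟨0, by simp [toK, hg]⟩
  have hsub : g.support ⊆ Set.Icc g.order 0 := by
    intro n hn
    refine ⟨HahnSeries.order_le_of_coeff_ne_zero hn, ?_⟩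
    by_contra hlt
    exact hn (h n (by omega))
  have hfin : g.support.Finite := (Set.finite_Icc _ _).subset hsub
  refine ⟨∑ n ∈ hfin.toFinset, Polynomial.C (g.coeff n) * Polynomial.X ^ (-n).toNat, ?_⟩
  have hstep : ∀ n ∈ hfin.toFinset,
      toK Fq (Polynomial.C (g.coeff n) * Polynomial.X ^ (-n).toNat)
        = HahnSeries.single n (g.coeff n) := by
    intro n hn
    have hn0 : n ≤ 0 := (hsub (hfin.mem_toFinset.mp hn)).2
    have : (-(((-n).toNat : ℕ)) : ℤ) = n := by omega
    have halg : (algebraMap Fq (Kinf Fq)) (g.coeff n) = HahnSeries.single (0:ℤ) (g.coeff n) := by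
      have h2 : (algebraMap Fq (PowerSeries Fq)) (g.coeff n) = PowerSeries.C (g.coeff n) := rfl
      simp [HahnSeries.algebraMap_apply', h2, HahnSeries.ofPowerSeries_C, HahnSeries.C_apply]
    rw [toK, map_mul, map_pow, Polynomial.aeval_C, Polynomial.aeval_X, Tinf_pow, halg,
      HahnSeries.single_mul_single, zero_add, mul_one, this]
  rw [toK, map_sum]
  simp only [toK] at hstep
  rw [Finset.sum_congr rfl hstep]
  ext m
  have hc : (∑ n ∈ hfin.toFinset, (HahnSeries.single n) (g.coeff n)).coeff m
      = ∑ n ∈ hfin.toFinset, ((HahnSeries.single n) (g.coeff n)).coeff m :=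
    map_sum (HahnSeries.coeff.addMonoidHom m) _ _
  rw [hc]
  by_cases hm : m ∈ hfin.toFinset
  · rw [Finset.sum_eq_single m (fun n _ hne => HahnSeries.coeff_single_of_ne (Ne.symm hne))
      (fun hnotm => absurd hm hnotm), HahnSeries.coeff_single_same]
  · have hms : g.coeff m = 0 := by
      by_contra hne
      exact hm (hfin.mem_toFinset.mpr hne)
    rw [hms, Finset.sum_eq_zero]
    intro n hn
    exact HahnSeries.coeff_single_of_ne (by rintro rfl; exact hm hn)


lemma exists_nonzero (f : Kinf Fq) (hf : ¬ IsRational Fq f) (a : Polynomial Fq) (ha : a ≠ 0) :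
    ∃ N : ℕ, (toK Fq a * Tinf Fq ^ N * f).coeff 1 ≠ 0 := by
  by_contra h
  push_neg at h
  have key : ∀ n : ℤ, 0 < n → (toK Fq a * f).coeff n = 0 := by
    intro n hn
    have h1 := h (n - 1).toNat
    have h2 : toK Fq a * Tinf Fq ^ (n - 1).toNat * f
        = HahnSeries.single (-(((n - 1).toNat : ℕ) : ℤ)) (1 : Fq) * (toK Fq a * f) := by
      rw [Tinf_pow]; ring
    rw [h2] at h1
    have h5 := HahnSeries.coeff_single_mul_add
      (r := (1 : Fq)) (x := toK Fq a * f) (a := n) (b := (-(((n - 1).toNat : ℕ) : ℤ)))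
    have h6 : n + (-(((n - 1).toNat : ℕ) : ℤ)) = 1 := by omega
    rw [h6, h1] at h5
    simpa using h5.symm
  obtain ⟨p, hp⟩ := rational_of_coeff Fq _ key
  exact hf ⟨p, a, ha, hp.symm⟩

lemma chi_zero (χ : Fq → ℂ) (hχ : ∀ x y : Fq, χ (x + y) = χ x * χ y)
    (hχ0 : ∀ x : Fq, χ x ≠ 0) : χ 0 = 1 := by
  have h := hχ 0 0
  rw [add_zero] at h
  exact mul_left_cancel₀ (hχ0 0) (by rw [mul_one, ← h])

lemma sum_chi (χ : Fq → ℂ) (hχ : ∀ x y : Fq, χ (x + y) = χ x * χ y)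
    (hχnt : ∃ x : Fq, χ x ≠ 1) : ∑ t : Fq, χ t = 0 := by
  obtain ⟨y, hy⟩ := hχnt
  have h : χ y * ∑ t : Fq, χ t = ∑ t : Fq, χ t := by
    rw [Finset.mul_sum]
    calc ∑ t : Fq, χ y * χ t = ∑ t : Fq, χ (y + t) := by
          exact Finset.sum_congr rfl fun t _ => (hχ y t).symm
      _ = ∑ t : Fq, χ t := Fintype.sum_equiv (Equiv.addLeft y) _ _ (fun t => rfl)
  have h2 : (χ y - 1) * ∑ t : Fq, χ t = 0 := by rw [sub_mul, one_mul, h, sub_self]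
  exact (mul_eq_zero.mp h2).resolve_left (sub_ne_zero.mpr hy)

lemma sum_chi_mul (χ : Fq → ℂ) (hχ : ∀ x y : Fq, χ (x + y) = χ x * χ y)
    (hχnt : ∃ x : Fq, χ x ≠ 1) (α : Fq) (hα : α ≠ 0) : ∑ t : Fq, χ (t * α) = 0 := by
  rw [Fintype.sum_equiv (Equiv.mulRight₀ α hα) (fun t => χ (t * α)) χ (fun t => rfl)]
  exact sum_chi Fq χ hχ hχnt

lemma chi_finset_sum (χ : Fq → ℂ) (hχ : ∀ x y : Fq, χ (x + y) = χ x * χ y)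
    (hχ0 : ∀ x : Fq, χ x ≠ 0) {ι : Type} (s : Finset ι) (g : ι → Fq) :
    χ (∑ i ∈ s, g i) = ∏ i ∈ s, χ (g i) := by
  classical
  induction s using Finset.cons_induction with
  | empty => simpa using chi_zero Fq χ hχ hχ0
  | cons i s hi ih => rw [Finset.sum_cons, Finset.prod_cons, hχ, ih]

/-- the Weyl-criterion limit: for irrational `f` and `0 ≠ a ∈ A`,
`q^{-(d+1)} Σ_{deg b ≤ d} χ(c_{-1}(a·b·f)) → 0`.  Polynomials `b` of degree `≤ d`
are parametrized by coefficient tuples `c : Fin (d+1) → Fq`, and `c_{-1}(g)` is the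
coefficient of `T^{-1} = X^{1}` in the Laurent series `g`. -/
theorem weyl_criterion_limit (f : Kinf Fq) (hf : ¬ IsRational Fq f)
    (a : Polynomial Fq) (ha : a ≠ 0)
    (χ : Fq → ℂ) (hχ : ∀ x y : Fq, χ (x + y) = χ x * χ y)
    (hχ0 : ∀ x : Fq, χ x ≠ 0) (hχnt : ∃ x : Fq, χ x ≠ 1) :
    Tendsto (fun d : ℕ =>
        ((Fintype.card Fq : ℂ) ^ (d + 1))⁻¹ *
          ∑ c : Fin (d + 1) → Fq,
            χ ((toK Fq a *
                toK Fq (∑ i : Fin (d + 1), Polynomial.C (c i) * Polynomial.X ^ (i : ℕ)) *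
                f).coeff 1))
      atTop (𝓝 0) := by
  obtain ⟨N, hN⟩ := exists_nonzero Fq f hf a ha
  set β : ℕ → Fq := fun i => (toK Fq a * f).coeff (1 + (i:ℤ)) with hβ
  have hβN : β N ≠ 0 := by
    intro h0
    apply hN
    rw [Tinf_pow, show toK Fq a * HahnSeries.single (-(N:ℤ)) (1:Fq) * f
      = HahnSeries.single (-(N:ℤ)) (1:Fq) * (toK Fq a * f) by ring,
      coeff_single_shift, one_mul]
    exact h0
  have hmain : ∀ d : ℕ, N ≤ d →
      (∑ c : Fin (d + 1) → Fq,
        χ ((toK Fq a *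
            toK Fq (∑ i : Fin (d + 1), Polynomial.C (c i) * Polynomial.X ^ (i : ℕ)) *
            f).coeff 1)) = 0 := by
    intro d hd
    have hco : ∀ c : Fin (d + 1) → Fq,
        (toK Fq a *
            toK Fq (∑ i : Fin (d + 1), Polynomial.C (c i) * Polynomial.X ^ (i : ℕ)) *
            f).coeff 1 = ∑ i : Fin (d + 1), c i * β (i : ℕ) := by
      intro c
      have h1 : toK Fq (∑ i : Fin (d + 1), Polynomial.C (c i) * Polynomial.X ^ (i : ℕ))
          = ∑ i : Fin (d + 1), HahnSeries.single (-((i : ℕ) : ℤ)) (c i) := by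
        rw [toK, map_sum]
        refine Finset.sum_congr rfl fun i _ => ?_
        exact toK_C_mul_X_pow Fq (c i) (i : ℕ)
      rw [h1, Finset.mul_sum, Finset.sum_mul]
      have h2 : ∀ i ∈ (Finset.univ : Finset (Fin (d + 1))),
          toK Fq a * HahnSeries.single (-((i : ℕ) : ℤ)) (c i) * f
            = HahnSeries.single (-((i : ℕ) : ℤ)) (c i) * (toK Fq a * f) := fun i _ => by ring
      rw [Finset.sum_congr rfl h2]
      have h3 : (∑ i : Fin (d + 1),
            HahnSeries.single (-((i : ℕ) : ℤ)) (c i) * (toK Fq a * f)).coeff 1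
          = ∑ i : Fin (d + 1),
            (HahnSeries.single (-((i : ℕ) : ℤ)) (c i) * (toK Fq a * f)).coeff 1 :=
        map_sum (HahnSeries.coeff.addMonoidHom (1 : ℤ)) _ _
      rw [h3]
      exact Finset.sum_congr rfl fun i _ => coeff_single_shift Fq _ _ _
    calc ∑ c : Fin (d + 1) → Fq,
          χ ((toK Fq a *
              toK Fq (∑ i : Fin (d + 1), Polynomial.C (c i) * Polynomial.X ^ (i : ℕ)) *
              f).coeff 1)
        = ∑ c : Fin (d + 1) → Fq, ∏ i : Fin (d + 1), χ (c i * β (i : ℕ)) := by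
          refine Finset.sum_congr rfl fun c _ => ?_
          rw [hco c, chi_finset_sum Fq χ hχ hχ0]
      _ = ∏ i : Fin (d + 1), ∑ t : Fq, χ (t * β (i : ℕ)) :=
          (Fintype.prod_sum (κ := fun _ : Fin (d + 1) => Fq)
            (fun i t => χ (t * β (i : ℕ)))).symm
      _ = 0 := by
          refine Finset.prod_eq_zero (Finset.mem_univ (⟨N, by omega⟩ : Fin (d + 1))) ?_
          exact sum_chi_mul Fq χ hχ hχnt (β N) hβN
  have hev : (fun d : ℕ =>
      ((Fintype.card Fq : ℂ) ^ (d + 1))⁻¹ *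
        ∑ c : Fin (d + 1) → Fq,
          χ ((toK Fq a *
              toK Fq (∑ i : Fin (d + 1), Polynomial.C (c i) * Polynomial.X ^ (i : ℕ)) *
              f).coeff 1)) =ᶠ[atTop] (fun _ => (0 : ℂ)) := by
    filter_upwards [eventually_ge_atTop N] with d hd
    rw [hmain d hd, mul_zero]
  exact (tendsto_congr' hev).mpr tendsto_const_nhds

end QuantumJ
end
end

section
/- Let r ∈ k_∞ with r ∉ A. Then there exists a ∈ A such that χ(c_{−1}(a·r)) ≠ 1. (Consequently, the character g ↦ χ(c_{−1}(r·g)) of k_∞ is trivial on A only if r ∈ A.) -/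
open scoped Classical
open Filter Topology

noncomputable section

namespace QuantumJ

variable (Fq : Type) [Field Fq] [Fintype Fq]

omit [Fintype Fq] in
lemma toK_monomial (n : ℕ) (c : Fq) :
    toK Fq (Polynomial.monomial n c) = HahnSeries.single (-(n : ℤ)) c := by
  rw [toK, Polynomial.aeval_monomial, Tinf, HahnSeries.single_pow]
  have : algebraMap Fq (Kinf Fq) c = HahnSeries.single (0:ℤ) c := by
    rw [HahnSeries.algebraMap_apply']
    have h2 : algebraMap Fq (PowerSeries Fq) c = PowerSeries.C c := rfl
    rw [h2, HahnSeries.ofPowerSeries_C, HahnSeries.C_apply]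
  rw [this, HahnSeries.single_mul_single]
  simp

omit [Fintype Fq] in
lemma toK_coeff (p : Polynomial Fq) (m : ℤ) :
    (toK Fq p).coeff m = if m ≤ 0 then p.coeff (-m).toNat else 0 := by
  induction p using Polynomial.induction_on' with
  | add p q hp hq =>
      rw [toK, map_add, HahnSeries.coeff_add]
      rw [toK] at hp hq
      rw [hp, hq]; split <;> simp
  | monomial n a =>
      rw [toK_monomial, HahnSeries.coeff_single, Polynomial.coeff_monomial]
      by_cases h : m = -(n:ℤ)
      · subst h; simp
      · rw [if_neg h]
        split
        · rw [if_neg]; omega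
        · rfl

/-- if `r ∈ k_∞` with `r ∉ A`, there is `a ∈ A` with `χ(c_{-1}(a·r)) ≠ 1`,
where `c_{-1}(g)` is the coefficient of `T^{-1} = X^{1}` in the Laurent series `g`. -/
theorem exists_nontrivial_character_value (r : Kinf Fq)
    (hr : ¬ ∃ p : Polynomial Fq, r = toK Fq p)
    (χ : Fq → ℂ) (hχ : ∀ x y : Fq, χ (x + y) = χ x * χ y)
    (hχ0 : ∀ x : Fq, χ x ≠ 0) (hχnt : ∃ x : Fq, χ x ≠ 1) :
    ∃ a : Polynomial Fq, χ ((toK Fq a * r).coeff 1) ≠ 1 := by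
  have hn : ∃ n : ℤ, 1 ≤ n ∧ r.coeff n ≠ 0 := by
    by_contra hcon
    push_neg at hcon
    apply hr
    by_cases hr0 : r = 0
    · exact ⟨0, by simp [hr0, toK]⟩
    set N : ℕ := (-r.order).toNat with hN
    refine ⟨∑ i ∈ Finset.range (N+1), Polynomial.monomial i (r.coeff (-(i:ℤ))), ?_⟩
    apply HahnSeries.ext
    funext m
    rw [toK_coeff]
    have hps : (∑ i ∈ Finset.range (N+1),
        Polynomial.monomial i (r.coeff (-(i:ℤ)))).coeff (-m).toNat =
        if (-m).toNat ∈ Finset.range (N+1) then r.coeff (-(((-m).toNat):ℤ)) else 0 := by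
      rw [Polynomial.finset_sum_coeff]
      simp [Polynomial.coeff_monomial]
    rw [hps]
    by_cases hm : m ≤ 0
    · rw [if_pos hm]
      by_cases hmN : (-m).toNat ∈ Finset.range (N+1)
      · rw [if_pos hmN]
        congr 1
        omega
      · rw [if_neg hmN]
        apply HahnSeries.coeff_eq_zero_of_lt_order
        simp only [Finset.mem_range] at hmN
        omega
    · rw [if_neg hm]
      exact hcon m (by omega)
  obtain ⟨n, hn1, hnc⟩ := hn
  obtain ⟨x, hx⟩ := hχnt
  refine ⟨Polynomial.monomial (n-1).toNat (x * (r.coeff n)⁻¹), ?_⟩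
  rw [toK_monomial]
  have h1 : ((n-1).toNat : ℤ) = n - 1 := by omega
  rw [h1]
  have key := HahnSeries.coeff_single_mul_add (r := x * (r.coeff n)⁻¹) (x := r)
    (a := n) (b := -(n-1))
  have e : n + -(n-1) = (1:ℤ) := by ring
  rw [e] at key
  rw [key]
  rw [mul_assoc, inv_mul_cancel₀ hnc, mul_one]
  exact hx

end QuantumJ
end
end
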